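/- arXiv:2503.10477 — 3 statements merged into one kernel-verified Lean document; each statement's English description precedes it below -/
import Mathlib

section
/- In the staircase case ν = (NE)^n, the ν-trees are in bijection with binary trees with n internal nodes; in particular the number of ν-trees equals the n-th Catalan number. -/
open scoped Classical

/-- Number of east steps (`false`) among the first `k` steps of the lattice path `ν`
(`true` = north step N, `false` = east step E). -/
def ecount (ν : List Bool) (k : ℕ) : ℕ := (ν.take k).count false

/-- Number of north steps (`true`) among the first `k` steps of `ν`. -/
def ncount (ν : List Bool) (k : ℕ) : ℕ := (ν.take k).count true

/-- The set `A_ν` of lattice points weakly above `ν` inside the smallest rectangle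
containing `ν` (the lattice points of the Ferrers diagram `F_ν`). -/
def Anu (ν : List Bool) : Set (ℤ × ℤ) :=
  {p | ∃ k ≤ ν.length, p.1 = (ecount ν k : ℤ) ∧ (ncount ν k : ℤ) ≤ p.2 ∧ p.2 ≤ (ν.count true : ℤ)}

/-- `p` is strictly southwest of `q`. -/
def strictSW (p q : ℤ × ℤ) : Prop := p.1 < q.1 ∧ p.2 < q.2

/-- The lattice points of the smallest axis-parallel rectangle containing `p` and `q`. -/
def rectPts (p q : ℤ × ℤ) : Set (ℤ × ℤ) :=
  {z | min p.1 q.1 ≤ z.1 ∧ z.1 ≤ max p.1 q.1 ∧ min p.2 q.2 ≤ z.2 ∧ z.2 ≤ max p.2 q.2}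

/-- `p` and `q` are ν-incompatible: one is strictly southwest (equivalently, the other is
strictly northeast) of the other and the rectangle they span lies inside `F_ν`. -/
def NuIncompatible (ν : List Bool) (p q : ℤ × ℤ) : Prop :=
  (strictSW p q ∨ strictSW q p) ∧ rectPts p q ⊆ Anu ν

/-- `p` and `q` are ν-compatible. -/
def NuCompatible (ν : List Bool) (p q : ℤ × ℤ) : Prop := ¬ NuIncompatible ν p q

/-- A ν-tree: a maximal collection of pairwise ν-compatible elements of `A_ν`. -/
def IsNuTree (ν : List Bool) (T : Set (ℤ × ℤ)) : Prop :=
  T ⊆ Anu ν ∧ (∀ p ∈ T, ∀ q ∈ T, NuCompatible ν p q) ∧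
    ∀ T', T ⊆ T' → T' ⊆ Anu ν → (∀ p ∈ T', ∀ q ∈ T', NuCompatible ν p q) → T' = T

/-!
Read a lattice point `(i, j)` with `i ≤ j` as the interval `[i, j]`. For `ν = (NE)^n`, `A_ν` is
the triangle `0 ≤ i ≤ j ≤ n`, and the rectangle spanned by two points lies in `F_ν` exactly when
its corner below the diagonal does, i.e. two points are ν-incompatible exactly when their
intervals cross (`i < i' ≤ j < j'`). So ν-trees are the maximal noncrossing families of
subintervals of `[0, n]`.

A maximal noncrossing family on `[a, b]` contains `[a, b]` and every `[i, i]`. If `a < b` and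
`[a, m]` is its longest member other than `[a, b]` starting at `a`, then it also contains
`[m + 1, b]`, every other member lies in `[a, m]` or in `[m + 1, b]`, and the two parts are
maximal noncrossing families there. Conversely, gluing two such families under `[a, b]` gives one
on `[a, b]`. This is the recursive decomposition of a binary tree with `b - a` internal nodes:
root `[a, b]`, subtrees on `[a, m]` and `[m + 1, b]`, leaves `[i, i]`.
-/

namespace NuTree

def staircase (n : ℕ) : List Bool := (List.replicate n [true, false]).flatten

lemma staircase_succ (n : ℕ) : staircase (n + 1) = true :: false :: staircase n := by
  simp [staircase, List.replicate_succ]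

lemma length_staircase (n : ℕ) : (staircase n).length = 2 * n := by
  induction n with
  | zero => rfl
  | succ n ih => simp [staircase_succ, ih]; omega

lemma count_true_staircase (n : ℕ) : (staircase n).count true = n := by
  induction n with
  | zero => rfl
  | succ n ih => simp [staircase_succ, ih]

lemma ecount_staircase (n k : ℕ) : ecount (staircase n) k = min (k / 2) n := by
  induction n generalizing k with
  | zero => simp [ecount, staircase]
  | succ n ih =>
    match k with
    | 0 | 1 => simp [ecount, staircase_succ]
    | k + 2 =>
      have := ih k
      simp only [ecount, staircase_succ, List.take_succ_cons, List.count_cons] at this ⊢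
      simp; omega

lemma ncount_staircase (n k : ℕ) : ncount (staircase n) k = min ((k + 1) / 2) n := by
  induction n generalizing k with
  | zero => simp [ncount, staircase]
  | succ n ih =>
    match k with
    | 0 | 1 => simp [ncount, staircase_succ]
    | k + 2 =>
      have := ih k
      simp only [ncount, staircase_succ, List.take_succ_cons, List.count_cons] at this ⊢
      simp; omega

def triangle (a b : ℤ) : Set (ℤ × ℤ) := {p | a ≤ p.1 ∧ p.1 ≤ p.2 ∧ p.2 ≤ b}

lemma anu_staircase (n : ℕ) : Anu (staircase n) = triangle 0 n := by
  ext ⟨x, y⟩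
  simp only [Anu, triangle, Set.mem_ofPred_eq, length_staircase, ecount_staircase,
    ncount_staircase, count_true_staircase]
  constructor
  · rintro ⟨k, -, rfl, hy, hyn⟩
    omega
  · rintro ⟨hx, hxy, hyn⟩
    exact ⟨2 * x.toNat, by omega, by omega, by omega, hyn⟩

def Crosses (p q : ℤ × ℤ) : Prop := p.1 < q.1 ∧ q.1 ≤ p.2 ∧ p.2 < q.2

def Noncrossing (p q : ℤ × ℤ) : Prop := ¬Crosses p q ∧ ¬Crosses q p

lemma nuIncompatible_comm {ν : List Bool} {p q : ℤ × ℤ} :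
    NuIncompatible ν p q ↔ NuIncompatible ν q p := by
  have hrect : rectPts p q = rectPts q p := by
    ext; simp only [rectPts, Set.mem_ofPred_eq, min_comm, max_comm]
  rw [NuIncompatible, NuIncompatible, or_comm, hrect]

lemma nuCompatible_comm {ν : List Bool} {p q : ℤ × ℤ} :
    NuCompatible ν p q ↔ NuCompatible ν q p :=
  not_congr nuIncompatible_comm

lemma nuCompatible_refl (ν : List Bool) (p : ℤ × ℤ) : NuCompatible ν p p := by
  rintro ⟨h | h, -⟩ <;> exact h.1.false

lemma nuIncompatible_staircase_iff {n : ℕ} {p q : ℤ × ℤ} (hp : p ∈ triangle 0 n)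
    (hq : q ∈ triangle 0 n) :
    NuIncompatible (staircase n) p q ↔ Crosses p q ∨ Crosses q p := by
  rw [NuIncompatible, anu_staircase]
  obtain ⟨hp₀, hp₁, hp₂⟩ := hp
  obtain ⟨hq₀, hq₁, hq₂⟩ := hq
  constructor
  · rintro ⟨⟨h₁, h₂⟩ | ⟨h₁, h₂⟩, hrect⟩
    · have hc : (q.1, p.2) ∈ rectPts p q := by simp only [rectPts, Set.mem_ofPred_eq]; omega
      exact Or.inl ⟨h₁, (hrect hc).2.1, h₂⟩
    · have hc : (p.1, q.2) ∈ rectPts p q := by simp only [rectPts, Set.mem_ofPred_eq]; omega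
      exact Or.inr ⟨h₁, (hrect hc).2.1, h₂⟩
  · rintro (⟨h₁, h₂, h₃⟩ | ⟨h₁, h₂, h₃⟩)
    · refine ⟨Or.inl ⟨h₁, h₃⟩, fun z hz => ?_⟩
      simp only [rectPts, triangle, Set.mem_ofPred_eq] at hz ⊢; omega
    · refine ⟨Or.inr ⟨h₁, h₃⟩, fun z hz => ?_⟩
      simp only [rectPts, triangle, Set.mem_ofPred_eq] at hz ⊢; omega

lemma nuCompatible_staircase_iff {n : ℕ} {p q : ℤ × ℤ} (hp : p ∈ triangle 0 n)
    (hq : q ∈ triangle 0 n) : NuCompatible (staircase n) p q ↔ Noncrossing p q := by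
  rw [NuCompatible, nuIncompatible_staircase_iff hp hq, Noncrossing, not_or]

lemma isNuTree_iff {ν : List Bool} {T : Set (ℤ × ℤ)} :
    IsNuTree ν T ↔ T ⊆ Anu ν ∧ (∀ p ∈ T, ∀ q ∈ T, NuCompatible ν p q) ∧
      ∀ p ∈ Anu ν, (∀ q ∈ T, NuCompatible ν p q) → p ∈ T := by
  refine and_congr_right fun hsub => and_congr_right fun hpair => ⟨fun hmax p hp hcomp => ?_,
    fun hmax T' hTT' hT' hpair' => ?_⟩
  · have hins : insert p T = T := by
      refine hmax _ (Set.subset_insert p T) (Set.insert_subset hp hsub) ?_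
      have hcomp' : ∀ q ∈ insert p T, NuCompatible ν p q := by
        rintro q (rfl | hq)
        exacts [nuCompatible_refl ν q, hcomp q hq]
      rintro x (rfl | hx) y hy
      · exact hcomp' y hy
      · rcases hy with rfl | hy
        exacts [nuCompatible_comm.1 (hcomp' x (Or.inr hx)), hpair x hx y hy]
    exact hins ▸ Set.mem_insert p T
  · exact (Set.Subset.antisymm (fun p hp => hmax p (hT' hp) fun q hq => hpair' p hp q (hTT' hq))
      hTT')

def IsMaxNoncrossing (a b : ℤ) (T : Set (ℤ × ℤ)) : Prop :=
  T ⊆ triangle a b ∧ (∀ p ∈ T, ∀ q ∈ T, Noncrossing p q) ∧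
    ∀ p ∈ triangle a b, (∀ q ∈ T, Noncrossing p q) → p ∈ T

lemma isNuTree_staircase_iff {n : ℕ} {T : Set (ℤ × ℤ)} :
    IsNuTree (staircase n) T ↔ IsMaxNoncrossing 0 n T := by
  rw [isNuTree_iff, anu_staircase]
  refine and_congr_right fun hsub => ?_
  have hcompat : ∀ p ∈ triangle 0 n, ∀ q ∈ T,
      (NuCompatible (staircase n) p q ↔ Noncrossing p q) :=
    fun p hp q hq => nuCompatible_staircase_iff hp (hsub hq)
  refine and_congr (forall₂_congr fun p hp => forall₂_congr fun q hq => hcompat p (hsub hp) q hq)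
    (forall₂_congr fun p hp => imp_congr_left (forall₂_congr fun q hq => hcompat p hp q hq))

lemma noncrossing_of_nested {p q : ℤ × ℤ} (h₁ : p.1 ≤ q.1) (h₂ : q.2 ≤ p.2) :
    Noncrossing p q := by
  simp only [Noncrossing, Crosses]; omega

lemma noncrossing_diag (i : ℤ) (q : ℤ × ℤ) : Noncrossing (i, i) q := by
  simp only [Noncrossing, Crosses]; omega

lemma isMaxNoncrossing_singleton (a : ℤ) : IsMaxNoncrossing a a {(a, a)} := by
  refine ⟨?_, ?_, ?_⟩
  · rintro _ rfl; exact ⟨le_rfl, le_rfl, le_rfl⟩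
  · rintro _ rfl _ rfl; exact noncrossing_diag a (a, a)
  · rintro ⟨x, y⟩ ⟨hx, hxy, hy⟩ -
    simp only [Set.mem_singleton_iff, Prod.mk.injEq]; omega

namespace IsMaxNoncrossing

variable {a b : ℤ} {T : Set (ℤ × ℤ)}

lemma mem_of_noncrossing (hT : IsMaxNoncrossing a b T) {p : ℤ × ℤ} (hp : p ∈ triangle a b)
    (h : ∀ q ∈ T, q ∈ triangle a b → Noncrossing p q) : p ∈ T :=
  hT.2.2 p hp fun q hq => h q hq (hT.1 hq)

lemma apex_mem (hT : IsMaxNoncrossing a b T) (hab : a ≤ b) : (a, b) ∈ T :=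
  hT.mem_of_noncrossing ⟨le_rfl, hab, le_rfl⟩ fun _ _ hq => noncrossing_of_nested hq.1 hq.2.2

lemma diag_mem (hT : IsMaxNoncrossing a b T) {i : ℤ} (hai : a ≤ i) (hib : i ≤ b) : (i, i) ∈ T :=
  hT.mem_of_noncrossing ⟨hai, le_rfl, hib⟩ fun q _ _ => noncrossing_diag i q

lemma eq_singleton (hT : IsMaxNoncrossing a a T) : T = {(a, a)} := by
  refine Set.Subset.antisymm (fun p hp => ?_)
    (Set.singleton_subset_iff.2 (hT.diag_mem le_rfl le_rfl))
  obtain ⟨h₁, h₂, h₃⟩ := hT.1 hp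
  exact Prod.ext (by omega) (by omega)

/-- An interval inside `[c, d]` crossing a member outside `[c, d]` would cross `[c, d]`. -/
lemma inter_triangle (hT : IsMaxNoncrossing a b T) {c d : ℤ} (hcd : (c, d) ∈ T) :
    IsMaxNoncrossing c d (T ∩ triangle c d) := by
  refine ⟨Set.inter_subset_right, fun p hp q hq => hT.2.1 p hp.1 q hq.1, fun p hp hcomp => ?_⟩
  obtain ⟨hac, -, hdb⟩ := hT.1 hcd
  refine ⟨hT.mem_of_noncrossing ⟨by linarith [hp.1], hp.2.1, by linarith [hp.2.2]⟩
    fun q hq hqab => ?_, hp⟩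
  by_cases hqcd : q ∈ triangle c d
  · exact hcomp q ⟨hq, hqcd⟩
  · have := hT.2.1 _ hcd q hq
    simp only [triangle, Noncrossing, Crosses, Set.mem_ofPred_eq] at hp hqab hqcd this ⊢
    omega

lemma exists_split (hT : IsMaxNoncrossing a b T) (hab : a < b) :
    ∃ m, a ≤ m ∧ m < b ∧ IsMaxNoncrossing a m (T ∩ triangle a m) ∧
      IsMaxNoncrossing (m + 1) b (T ∩ triangle (m + 1) b) ∧
      T = insert (a, b) (T ∩ triangle a m ∪ T ∩ triangle (m + 1) b) := by
  obtain ⟨m, ⟨ham, hmb⟩, hmax⟩ := Int.exists_greatest_of_bdd (P := fun k => (a, k) ∈ T ∧ k < b)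
    ⟨b, fun k hk => hk.2.le⟩ ⟨a, hT.diag_mem le_rfl hab.le, hab⟩
  have hma : a ≤ m := (hT.1 ham).2.1
  have hside : ∀ q ∈ T, q = (a, b) ∨ q.2 ≤ m ∨ m + 1 ≤ q.1 := by
    intro q hq
    obtain ⟨hq₁, -, hq₂⟩ := hT.1 hq
    by_cases hqa : q.1 = a
    · by_cases hqb : q.2 = b
      · exact Or.inl (Prod.ext hqa hqb)
      · exact Or.inr (Or.inl (hmax q.2 ⟨hqa ▸ hq, by omega⟩))
    · have := (hT.2.1 _ ham q hq).1
      simp only [Crosses] at this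
      omega
  have hright : (m + 1, b) ∈ T := by
    refine hT.mem_of_noncrossing ⟨by omega, by omega, le_rfl⟩ fun q hq hqab => ?_
    obtain ⟨hq₁, hq₂, hq₃⟩ := hqab
    rcases hside q hq with rfl | h | h <;> simp only [Noncrossing, Crosses] <;> omega
  refine ⟨m, hma, hmb, hT.inter_triangle ham, hT.inter_triangle hright, ?_⟩
  ext q
  refine ⟨fun hq => ?_, ?_⟩
  · obtain ⟨hq₁, hq₂, hq₃⟩ := hT.1 hq
    rcases hside q hq with rfl | h | h
    exacts [Set.mem_insert _ _, Or.inr (Or.inl ⟨hq, hq₁, hq₂, h⟩),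
      Or.inr (Or.inr ⟨hq, h, hq₂, hq₃⟩)]
  · rintro (rfl | hq | hq)
    exacts [hT.apex_mem hab.le, hq.1, hq.1]

end IsMaxNoncrossing

lemma isMaxNoncrossing_insert_union {a m b : ℤ} {L R : Set (ℤ × ℤ)}
    (hL : IsMaxNoncrossing a m L) (hR : IsMaxNoncrossing (m + 1) b R) (ham : a ≤ m)
    (hmb : m < b) : IsMaxNoncrossing a b (insert (a, b) (L ∪ R)) := by
  have hsub : L ∪ R ⊆ triangle a b := by
    rintro p (hp | hp)
    · obtain ⟨h₁, h₂, h₃⟩ := hL.1 hp; exact ⟨h₁, h₂, by omega⟩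
    · obtain ⟨h₁, h₂, h₃⟩ := hR.1 hp; exact ⟨by omega, h₂, h₃⟩
  refine ⟨Set.insert_subset ⟨le_rfl, hmb.le.trans' ham, le_rfl⟩ hsub, ?_, ?_⟩
  · have hapex : ∀ q ∈ L ∪ R, Noncrossing (a, b) q :=
      fun q hq => noncrossing_of_nested (hsub hq).1 (hsub hq).2.2
    rintro p (rfl | hp) q (rfl | hq)
    · exact noncrossing_of_nested le_rfl le_rfl
    · exact hapex q hq
    · exact (hapex p hp).symm
    · rcases hp with hp | hp <;> rcases hq with hq | hq
      · exact hL.2.1 p hp q hq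
      · have := hL.1 hp; have := hR.1 hq
        simp only [triangle, Noncrossing, Crosses, Set.mem_ofPred_eq] at *; omega
      · have := hR.1 hp; have := hL.1 hq
        simp only [triangle, Noncrossing, Crosses, Set.mem_ofPred_eq] at *; omega
      · exact hR.2.1 p hp q hq
  · rintro p ⟨hp₁, hp₂, hp₃⟩ hcomp
    by_cases hpm : p.2 ≤ m
    · exact Or.inr (Or.inl (hL.2.2 p ⟨hp₁, hp₂, hpm⟩ fun q hq => hcomp q (Or.inr (Or.inl hq))))
    by_cases hmp : m + 1 ≤ p.1
    · exact Or.inr (Or.inr (hR.2.2 p ⟨hmp, hp₂, hp₃⟩ fun q hq => hcomp q (Or.inr (Or.inr hq))))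
    -- `p` straddles `m`: it must contain both `[a, m]` and `[m + 1, b]`
    have h₁ := hcomp _ (Or.inr (Or.inl (hL.apex_mem ham)))
    have h₂ := hcomp _ (Or.inr (Or.inr (hR.apex_mem hmb)))
    simp only [Noncrossing, Crosses] at h₁ h₂
    exact Or.inl (Prod.ext (by omega) (by omega))

def intervals : BinaryTree Unit → ℤ → Set (ℤ × ℤ)
  | .nil, a => {(a, a)}
  | t@(.node _ l r), a =>
    insert (a, a + t.numNodes) (intervals l a ∪ intervals r (a + l.numNodes + 1))

lemma add_numNodes_node (u : Unit) (l r : BinaryTree Unit) (a : ℤ) :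
    a + ((BinaryTree.node u l r).numNodes : ℤ) = a + l.numNodes + 1 + r.numNodes := by
  push_cast [BinaryTree.numNodes]; ring

lemma isMaxNoncrossing_intervals (t : BinaryTree Unit) (a : ℤ) :
    IsMaxNoncrossing a (a + t.numNodes) (intervals t a) := by
  induction t generalizing a with
  | nil => simpa [intervals] using isMaxNoncrossing_singleton a
  | node u l r ihl ihr =>
    have hR := ihr (a + l.numNodes + 1)
    rw [← add_numNodes_node u] at hR
    exact isMaxNoncrossing_insert_union (ihl a) hR (by omega)
      (by push_cast [BinaryTree.numNodes]; omega)

section Glue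

variable {a m b : ℤ} {L R : Set (ℤ × ℤ)}

lemma le_of_mem_insert_union (hL : L ⊆ triangle a m) (hR : R ⊆ triangle (m + 1) b)
    (ham : a ≤ m) {k : ℤ} (hk : (a, k) ∈ insert (a, b) (L ∪ R)) (hkb : k < b) : k ≤ m := by
  rcases hk with hk | hk | hk
  · exact absurd (Prod.ext_iff.1 hk).2 hkb.ne
  · exact (hL hk).2.2
  · exact absurd (hR hk).1 (by simp only; omega)

lemma insert_union_inter_triangle_left (hL : L ⊆ triangle a m) (hR : R ⊆ triangle (m + 1) b)
    (hmb : m < b) : insert (a, b) (L ∪ R) ∩ triangle a m = L := by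
  refine Set.Subset.antisymm ?_ fun p hp => ⟨Or.inr (Or.inl hp), hL hp⟩
  rintro p ⟨rfl | hp | hp, hpm⟩
  · exact absurd hpm.2.2 (by simp only; omega)
  · exact hp
  · exact absurd hpm.2.2 (by have := hR hp; simp only [triangle, Set.mem_ofPred_eq] at this; omega)

lemma insert_union_inter_triangle_right (hL : L ⊆ triangle a m) (hR : R ⊆ triangle (m + 1) b)
    (ham : a ≤ m) : insert (a, b) (L ∪ R) ∩ triangle (m + 1) b = R := by
  refine Set.Subset.antisymm ?_ fun p hp => ⟨Or.inr (Or.inr hp), hR hp⟩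
  rintro p ⟨rfl | hp | hp, hpm⟩
  · exact absurd hpm.1 (by simp only; omega)
  · exact absurd hpm.1 (by have := hL hp; simp only [triangle, Set.mem_ofPred_eq] at this; omega)
  · exact hp

end Glue

section Node

variable (u : Unit) (l r : BinaryTree Unit) (a : ℤ)

lemma intervals_left_subset : intervals l a ⊆ triangle a (a + l.numNodes) :=
  (isMaxNoncrossing_intervals l a).1

lemma intervals_right_subset :
    intervals r (a + l.numNodes + 1) ⊆
      triangle (a + l.numNodes + 1) (a + (BinaryTree.node u l r).numNodes) :=
  add_numNodes_node u l r a ▸ (isMaxNoncrossing_intervals r _).1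

lemma intervals_node_inter_triangle_left :
    intervals (.node u l r) a ∩ triangle a (a + l.numNodes) = intervals l a :=
  insert_union_inter_triangle_left (intervals_left_subset l a) (intervals_right_subset u l r a)
    (by push_cast [BinaryTree.numNodes]; omega)

lemma intervals_node_inter_triangle_right :
    intervals (.node u l r) a ∩
        triangle (a + l.numNodes + 1) (a + (BinaryTree.node u l r).numNodes) =
      intervals r (a + l.numNodes + 1) :=
  insert_union_inter_triangle_right (intervals_left_subset l a) (intervals_right_subset u l r a)
    (by omega)

end Node

lemma numNodes_eq_of_intervals_eq {t t' : BinaryTree Unit} {a : ℤ}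
    (h : intervals t a = intervals t' a) : t.numNodes = t'.numNodes := by
  have h₁ : a + (t.numNodes : ℤ) ≤ a + t'.numNodes := ((isMaxNoncrossing_intervals t' a).1
    (h ▸ (isMaxNoncrossing_intervals t a).apex_mem (by omega))).2.2
  have h₂ : a + (t'.numNodes : ℤ) ≤ a + t.numNodes := ((isMaxNoncrossing_intervals t a).1
    (h.symm ▸ (isMaxNoncrossing_intervals t' a).apex_mem (by omega))).2.2
  omega

/-- The left subtree is recovered from the family as its longest proper member starting at `a`. -/
lemma numNodes_left_le_of_intervals_eq {u u' : Unit} {l r l' r' : BinaryTree Unit} {a : ℤ}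
    (h : intervals (.node u l r) a = intervals (.node u' l' r') a) :
    l'.numNodes ≤ l.numNodes := by
  have hsize := numNodes_eq_of_intervals_eq h
  have hk : (a, a + (l'.numNodes : ℤ)) ∈ intervals (.node u l r) a :=
    h ▸ Or.inr (Or.inl ((isMaxNoncrossing_intervals l' a).apex_mem (by omega)))
  have := le_of_mem_insert_union (intervals_left_subset l a) (intervals_right_subset u l r a)
    (by omega) hk (by simp only [BinaryTree.numNodes] at hsize ⊢; push_cast; omega)
  omega

lemma intervals_inj {t t' : BinaryTree Unit} {a : ℤ} (h : intervals t a = intervals t' a) :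
    t = t' := by
  induction t generalizing t' a with
  | nil =>
    cases t' with
    | nil => rfl
    | node => simpa [BinaryTree.numNodes] using numNodes_eq_of_intervals_eq h
  | node u l r ihl ihr =>
    cases t' with
    | nil => simpa [BinaryTree.numNodes] using numNodes_eq_of_intervals_eq h
    | node u' l' r' =>
      have hsize := numNodes_eq_of_intervals_eq h
      have hl : l.numNodes = l'.numNodes :=
        le_antisymm (numNodes_left_le_of_intervals_eq h.symm) (numNodes_left_le_of_intervals_eq h)
      have hL : intervals l a = intervals l' a := by
        rw [← intervals_node_inter_triangle_left u l r, h, hl,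
          intervals_node_inter_triangle_left]
      have hR : intervals r (a + l.numNodes + 1) = intervals r' (a + l'.numNodes + 1) := by
        rw [← intervals_node_inter_triangle_right u l r, h, hl, hsize,
          intervals_node_inter_triangle_right]
      rw [hl] at hR
      rw [ihl hL, ihr hR]

lemma exists_intervals_eq (d : ℕ) (a : ℤ) {T : Set (ℤ × ℤ)}
    (hT : IsMaxNoncrossing a (a + d) T) :
    ∃ t : BinaryTree Unit, t.numNodes = d ∧ intervals t a = T := by
  induction d using Nat.strong_induction_on generalizing a T with
  | _ d ih =>
  rcases Nat.eq_zero_or_pos d with rfl | hd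
  · rw [Nat.cast_zero, add_zero] at hT
    exact ⟨.nil, rfl, hT.eq_singleton.symm⟩
  obtain ⟨m, ham, hmb, hL, hR, hTeq⟩ := hT.exists_split (by omega)
  obtain ⟨d₁, rfl⟩ : ∃ d₁ : ℕ, m = a + d₁ := ⟨(m - a).toNat, by omega⟩
  obtain ⟨d₂, rfl⟩ : ∃ d₂ : ℕ, d = d₁ + d₂ + 1 := ⟨d - d₁ - 1, by omega⟩
  set R := T ∩ triangle (a + d₁ + 1) (a + ↑(d₁ + d₂ + 1))
  rw [show a + ((d₁ + d₂ + 1 : ℕ) : ℤ) = a + d₁ + 1 + d₂ by push_cast; ring] at hR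
  obtain ⟨l, rfl, hl⟩ := ih d₁ (by omega) a hL
  obtain ⟨r, rfl, hr⟩ := ih d₂ (by omega) _ hR
  refine ⟨.node () l r, rfl, ?_⟩
  rw [hTeq, intervals, hl, hr]
  rfl

noncomputable def staircaseNuTreeEquiv (n : ℕ) :
    {t : BinaryTree Unit // t.numNodes = n} ≃ {T // IsNuTree (staircase n) T} :=
  Equiv.ofBijective
    (fun t => ⟨intervals t 0, isNuTree_staircase_iff.2 (by
      simpa [t.2] using isMaxNoncrossing_intervals t.1 0)⟩)
    ⟨fun _ _ h => Subtype.ext (intervals_inj (congrArg Subtype.val h)), fun T => by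
      obtain ⟨t, ht, hT⟩ := exists_intervals_eq n 0 (by simpa using isNuTree_staircase_iff.1 T.2)
      exact ⟨⟨t, ht⟩, Subtype.ext hT⟩⟩

lemma card_binaryTree_numNodes_eq (n : ℕ) :
    Nat.card {t : BinaryTree Unit // t.numNodes = n} = catalan n := by
  rw [← BinaryTree.treesOfNumNodesEq_card_eq_catalan, ← Nat.card_eq_finsetCard]
  exact Nat.card_congr (Equiv.subtypeEquivRight fun _ => BinaryTree.mem_treesOfNumNodesEq.symm)

end NuTree

/-- for the staircase path `ν = (NE)^n`, the ν-trees are in bijection with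
binary trees with `n` internal nodes; in particular their number is the `n`-th Catalan
number. -/
theorem nuTrees_staircase_catalan (n : ℕ) :
    Nonempty ({T : Set (ℤ × ℤ) // IsNuTree (List.flatten (List.replicate n [true, false])) T}
      ≃ {t : Tree Unit // t.numNodes = n}) ∧
    Nat.card {T : Set (ℤ × ℤ) // IsNuTree (List.flatten (List.replicate n [true, false])) T}
      = catalan n :=
  ⟨⟨(NuTree.staircaseNuTreeEquiv n).symm⟩,
    (Nat.card_congr (NuTree.staircaseNuTreeEquiv n).symm).trans
      (NuTree.card_binaryTree_numNodes_eq n)⟩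
end

section
/- Every node of a ν-tree other than the root has either a node strictly to its north in the same column or a node strictly to its west in the same row (within the tree), so the parent map connecting each non-root node to the nearest tree node to its north or west is well defined, and the resulting graph is a rooted tree. -/
open scoped Classical

/-- `q` is the nearest node of `T` strictly north of `p` in the same column, or the
nearest node of `T` strictly west of `p` in the same row. -/
def NorthOrWestNearest (T : Set (ℤ × ℤ)) (p q : ℤ × ℤ) : Prop :=
  q ∈ T ∧
    ((q.1 = p.1 ∧ p.2 < q.2 ∧ ∀ q' ∈ T, q'.1 = p.1 → p.2 < q'.2 → q.2 ≤ q'.2) ∨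
     (q.2 = p.2 ∧ q.1 < p.1 ∧ ∀ q' ∈ T, q'.2 = p.2 → q'.1 < p.1 → q'.1 ≤ q.1))

/-!
By maximality, every point of `A_ν` outside a ν-tree `T` is incompatible with some node; the
root `(0, #N)` is compatible with every point, so it is a node. Suppose a node `p ≠ root` had no
node north of it in its column and none west of it in its row. Among the nodes `r` west of `p`
with `(p.1, r.2) ∈ A_ν` (one exists: any node incompatible with the top point of `p`'s column)
take the lowest. Compatibility with `p` puts it above `p`, so `(p.1, r.2)` is not a node, and a
node incompatible with it is either a lower such `r` or incompatible with `r` itself.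
Nodes north and west of the same node would be incompatible (with that node as corner), so the
nearest one is unique. Each parent step lowers `x + (#N - y)`, so iterating reaches the root.
-/

theorem Nat.exists_le_map_eq_of_map_succ_le {f : ℕ → ℕ} (hf : ∀ k, f (k + 1) ≤ f k + 1)
    {m n : ℕ} (h₀ : f 0 ≤ m) (hn : m ≤ f n) : ∃ j ≤ n, f j = m := by
  induction n with
  | zero => exact ⟨0, le_rfl, by omega⟩
  | succ n ih =>
    by_cases hm : m ≤ f n
    · obtain ⟨j, hj, hfj⟩ := ih hm
      exact ⟨j, by omega, hfj⟩
    · exact ⟨n + 1, le_rfl, by have := hf n; omega⟩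

def nuRoot (ν : List Bool) : ℤ × ℤ := (0, ν.count true)

section Anu

variable {ν : List Bool}

theorem ecount_zero : ecount ν 0 = 0 := by simp [ecount]

theorem ncount_mono : Monotone (ncount ν) := fun _ _ h =>
  (List.take_sublist_take_left h).count_le _

theorem ecount_succ_le (k : ℕ) : ecount ν (k + 1) ≤ ecount ν k + 1 := by
  have : (ν[k]?.toList).length ≤ 1 := by cases ν[k]? <;> simp
  have := (ν[k]?.toList).count_le_length (a := false)
  simp only [ecount, List.take_add_one, List.count_append]
  omega

theorem nonneg_fst_of_mem_Anu {p : ℤ × ℤ} (h : p ∈ Anu ν) : 0 ≤ p.1 := by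
  obtain ⟨k, -, hk, -⟩ := h
  exact hk ▸ Int.natCast_nonneg _

theorem snd_le_of_mem_Anu {p : ℤ × ℤ} (h : p ∈ Anu ν) : p.2 ≤ ν.count true :=
  h.choose_spec.2.2.2

theorem mem_Anu_of_northwest {p q : ℤ × ℤ} (hp : p ∈ Anu ν) (h₀ : 0 ≤ q.1)
    (h₁ : q.1 ≤ p.1) (h₂ : p.2 ≤ q.2) (h₃ : q.2 ≤ ν.count true) : q ∈ Anu ν := by
  obtain ⟨k, hk, hx, hy, -⟩ := hp
  obtain ⟨j, hjk, hj⟩ := Nat.exists_le_map_eq_of_map_succ_le ecount_succ_le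
    (ecount_zero.trans_le (Nat.zero_le q.1.toNat)) (by omega : q.1.toNat ≤ ecount ν k)
  have := ncount_mono (ν := ν) hjk
  exact ⟨j, hjk.trans hk, by omega, by omega, h₃⟩

theorem nuRoot_mem_Anu : nuRoot ν ∈ Anu ν :=
  ⟨0, Nat.zero_le _, by simp [nuRoot, ecount, ncount]⟩

end Anu

section Compatibility

variable {ν : List Bool} {p q r s : ℤ × ℤ}

theorem rectPts_comm : rectPts p q = rectPts q p := by
  ext z
  simp only [rectPts, Set.mem_ofPred_eq, min_comm, max_comm]

theorem right_mem_rectPts : q ∈ rectPts p q :=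
  ⟨min_le_right _ _, le_max_right _ _, min_le_right _ _, le_max_right _ _⟩

theorem fst_snd_mem_rectPts : (q.1, p.2) ∈ rectPts p q :=
  ⟨min_le_right _ _, le_max_right _ _, min_le_left _ _, le_max_left _ _⟩

theorem snd_fst_mem_rectPts : (p.1, q.2) ∈ rectPts p q :=
  ⟨min_le_left _ _, le_max_left _ _, min_le_right _ _, le_max_right _ _⟩

theorem NuIncompatible.symm (h : NuIncompatible ν p q) : NuIncompatible ν q p :=
  ⟨h.1.symm, rectPts_comm (p := q) ▸ h.2⟩

theorem NuCompatible.symm (h : NuCompatible ν p q) : NuCompatible ν q p :=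
  fun h' => h h'.symm

theorem nuCompatible_self : NuCompatible ν p p := by
  rintro ⟨⟨h, -⟩ | ⟨h, -⟩, -⟩ <;> exact lt_irrefl _ h

theorem nuIncompatible_of_corner_mem (hr : r ∈ Anu ν) (hs : s ∈ Anu ν) (h₁ : r.1 < s.1)
    (h₂ : r.2 < s.2) (hc : (s.1, r.2) ∈ Anu ν) : NuIncompatible ν r s := by
  refine ⟨Or.inl ⟨h₁, h₂⟩, fun z ⟨z₁, z₂, z₃, z₄⟩ => ?_⟩
  simp only [min_eq_left h₁.le, max_eq_right h₁.le, min_eq_left h₂.le, max_eq_right h₂.le]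
    at z₁ z₂ z₃ z₄
  have := nonneg_fst_of_mem_Anu hr
  have := snd_le_of_mem_Anu hs
  exact mem_Anu_of_northwest hc (by omega) z₂ z₃ (by omega)

theorem nuCompatible_nuRoot (p : ℤ × ℤ) : NuCompatible ν (nuRoot ν) p := by
  rintro ⟨⟨-, h⟩ | ⟨h, -⟩, hrect⟩
  · exact (snd_le_of_mem_Anu (hrect right_mem_rectPts)).not_gt h
  · exact (nonneg_fst_of_mem_Anu (hrect right_mem_rectPts)).not_gt h

end Compatibility

section Nearest

variable {T : Set (ℤ × ℤ)} {p : ℤ × ℤ}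

theorem exists_northOrWestNearest_of_north (h : ∃ q ∈ T, q.1 = p.1 ∧ p.2 < q.2) :
    ∃ q, NorthOrWestNearest T p q := by
  obtain ⟨q, hqT, hq₁, hq₂⟩ := h
  obtain ⟨b, ⟨w, hwT, hw₁, rfl, hw₂⟩, hleast⟩ := Int.exists_least_of_bdd
    (P := fun b => ∃ w ∈ T, w.1 = p.1 ∧ w.2 = b ∧ p.2 < b)
    ⟨p.2, fun _ ⟨_, _, _, _, h⟩ => h.le⟩ ⟨q.2, q, hqT, hq₁, rfl, hq₂⟩
  exact ⟨w, hwT, Or.inl ⟨hw₁, hw₂, fun q' hq' he hl =>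
    hleast _ ⟨q', hq', he, rfl, hl⟩⟩⟩

theorem exists_northOrWestNearest_of_west (h : ∃ q ∈ T, q.2 = p.2 ∧ q.1 < p.1) :
    ∃ q, NorthOrWestNearest T p q := by
  obtain ⟨q, hqT, hq₂, hq₁⟩ := h
  obtain ⟨b, ⟨w, hwT, hw₂, rfl, hw₁⟩, hgreatest⟩ := Int.exists_greatest_of_bdd
    (P := fun b => ∃ w ∈ T, w.2 = p.2 ∧ w.1 = b ∧ b < p.1)
    ⟨p.1, fun _ ⟨_, _, _, _, h⟩ => h.le⟩ ⟨q.1, q, hqT, hq₂, rfl, hq₁⟩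
  exact ⟨w, hwT, Or.inr ⟨hw₂, hw₁, fun q' hq' he hl =>
    hgreatest _ ⟨q', hq', he, rfl, hl⟩⟩⟩

theorem NorthOrWestNearest.eq {q q' : ℤ × ℤ}
    (hexcl : ∀ n ∈ T, ∀ w ∈ T, n.1 = p.1 → p.2 < n.2 → w.2 = p.2 → w.1 < p.1 →
      False)
    (hq : NorthOrWestNearest T p q) (hq' : NorthOrWestNearest T p q') : q = q' := by
  obtain ⟨hqT, ⟨e, l, m⟩ | ⟨e, l, m⟩⟩ := hq <;>
    obtain ⟨hq'T, ⟨e', l', m'⟩ | ⟨e', l', m'⟩⟩ := hq'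
  · exact Prod.ext (e.trans e'.symm) (le_antisymm (m q' hq'T e' l') (m' q hqT e l))
  · exact (hexcl q hqT q' hq'T e l e' l').elim
  · exact (hexcl q' hq'T q hqT e' l' e l).elim
  · exact Prod.ext (le_antisymm (m' q hqT e l) (m q' hq'T e' l')) (e.trans e'.symm)

end Nearest

theorem exists_iterate_eq_of_measure_lt {α : Type*} {s : Set α} {r : α} (f : α → α)
    (μ : α → ℕ) (hf : ∀ x ∈ s, x ≠ r → f x ∈ s ∧ μ (f x) < μ x) :
    ∀ x ∈ s, ∃ k : ℕ, f^[k] x = r := by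
  intro x
  induction h : μ x using Nat.strong_induction_on generalizing x with
  | _ n ih =>
    intro hx
    by_cases hxr : x = r
    · exact ⟨0, hxr⟩
    obtain ⟨hfx, hlt⟩ := hf x hx hxr
    obtain ⟨k, hk⟩ := ih _ (h ▸ hlt) (f x) rfl hfx
    exact ⟨k + 1, hk⟩

namespace IsNuTree

variable {ν : List Bool} {T : Set (ℤ × ℤ)} (hT : IsNuTree ν T)
include hT

theorem mem_of_forall_nuCompatible {c : ℤ × ℤ} (hc : c ∈ Anu ν)
    (hcomp : ∀ s ∈ T, NuCompatible ν s c) : c ∈ T := by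
  have hins : insert c T = T := by
    refine hT.2.2 _ (Set.subset_insert _ _) (Set.insert_subset hc hT.1) ?_
    rintro a (rfl | ha) b (rfl | hb)
    · exact nuCompatible_self
    · exact (hcomp b hb).symm
    · exact hcomp a ha
    · exact hT.2.1 a ha b hb
  exact hins ▸ Set.mem_insert c T

theorem exists_nuIncompatible_of_notMem {c : ℤ × ℤ} (hc : c ∈ Anu ν) (hcT : c ∉ T) :
    ∃ s ∈ T, NuIncompatible ν s c := by
  by_contra! h
  exact hcT (hT.mem_of_forall_nuCompatible hc h)

theorem nuRoot_mem : nuRoot ν ∈ T :=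
  hT.mem_of_forall_nuCompatible nuRoot_mem_Anu fun s _ => (nuCompatible_nuRoot s).symm

theorem not_north_and_west {p : ℤ × ℤ} (hp : p ∈ T) :
    ∀ n ∈ T, ∀ w ∈ T, n.1 = p.1 → p.2 < n.2 → w.2 = p.2 → w.1 < p.1 → False :=
  fun n hn w hw hn₁ hn₂ hw₂ hw₁ => hT.2.1 w hw n hn <|
    nuIncompatible_of_corner_mem (hT.1 hw) (hT.1 hn) (by omega) (by omega)
      (by rw [hn₁, hw₂]; exact hT.1 hp)

theorem lt_snd_of_west_corner_mem {p r : ℤ × ℤ} (hp : p ∈ T)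
    (hno_w : ∀ q ∈ T, q.2 = p.2 → p.1 ≤ q.1) (hr : r ∈ T) (hr₁ : r.1 < p.1)
    (hc : (p.1, r.2) ∈ Anu ν) : p.2 < r.2 := by
  rcases lt_trichotomy r.2 p.2 with h | h | h
  · exact (hT.2.1 r hr p hp (nuIncompatible_of_corner_mem (hT.1 hr) (hT.1 hp) hr₁ h hc)).elim
  · exact ((hno_w r hr h).not_gt hr₁).elim
  · exact h

theorem exists_north_or_west {p : ℤ × ℤ} (hp : p ∈ T) (hne : p ≠ nuRoot ν) :
    (∃ q ∈ T, q.1 = p.1 ∧ p.2 < q.2) ∨ (∃ q ∈ T, q.2 = p.2 ∧ q.1 < p.1) := by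
  by_contra! ⟨hno_n, hno_w⟩
  have hpA := hT.1 hp
  have hp₁ := nonneg_fst_of_mem_Anu hpA
  have hp₂ := snd_le_of_mem_Anu hpA
  have hcol {b : ℤ} (hb : p.2 < b) (hbN : b ≤ ν.count true) :
      (p.1, b) ∈ Anu ν ∧ (p.1, b) ∉ T :=
    ⟨mem_Anu_of_northwest hpA hp₁ le_rfl hb.le hbN, fun h => (hno_n _ h rfl).not_gt hb⟩
  rcases hp₂.eq_or_lt with htop | htop
  · exact hne (Prod.ext (le_antisymm (hno_w _ hT.nuRoot_mem htop.symm) hp₁) htop)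
  obtain ⟨s₀, hs₀T, hs₀⟩ := hT.exists_nuIncompatible_of_notMem (hcol htop le_rfl).1
    (hcol htop le_rfl).2
  have hs₀₁ : s₀.1 < p.1 := by
    rcases hs₀.1 with ⟨h, -⟩ | ⟨-, h⟩
    · exact h
    · exact ((snd_le_of_mem_Anu (hT.1 hs₀T)).not_gt h).elim
  -- `r` is the lowest node west of `p` whose row meets `p`'s column inside `A_ν`.
  obtain ⟨b, ⟨r, hrT, hr₁, rfl, hrc⟩, hleast⟩ := Int.exists_least_of_bdd
    (P := fun b => ∃ r ∈ T, r.1 < p.1 ∧ r.2 = b ∧ (p.1, b) ∈ Anu ν)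
    ⟨p.2, fun _ ⟨r, hr, h₁, h₂, hc⟩ =>
      h₂ ▸ (hT.lt_snd_of_west_corner_mem hp hno_w hr h₁ (h₂ ▸ hc)).le⟩
    ⟨s₀.2, s₀, hs₀T, hs₀₁, rfl, hs₀.2 fst_snd_mem_rectPts⟩
  have hb := hT.lt_snd_of_west_corner_mem hp hno_w hrT hr₁ hrc
  obtain ⟨hcA, hcT⟩ := hcol hb (snd_le_of_mem_Anu (hT.1 hrT))
  obtain ⟨s, hsT, hs⟩ := hT.exists_nuIncompatible_of_notMem hcA hcT
  rcases hs.1 with ⟨h₁, h₂⟩ | ⟨h₁, h₂⟩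
  · exact (hleast s.2 ⟨s, hsT, h₁, rfl, hs.2 fst_snd_mem_rectPts⟩).not_gt h₂
  · exact hT.2.1 r hrT s hsT <| nuIncompatible_of_corner_mem (hT.1 hrT) (hT.1 hsT)
      (hr₁.trans h₁) h₂ (hs.2 snd_fst_mem_rectPts)

end IsNuTree

/-- in a ν-tree every non-root node has a node strictly to its north in the
same column or strictly to its west in the same row; the parent map (nearest such node)
is well defined, and the resulting graph is a tree rooted at the top-left corner
`(0, #N-steps)` of `F_ν` (every node reaches the root by iterating the parent map). -/
theorem nuTree_parent_rooted_tree (ν : List Bool) (T : Set (ℤ × ℤ))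
    (hT : IsNuTree ν T) :
    ((0 : ℤ), (ν.count true : ℤ)) ∈ T ∧
    (∀ p ∈ T, p ≠ ((0 : ℤ), (ν.count true : ℤ)) →
      (∃ q ∈ T, q.1 = p.1 ∧ p.2 < q.2) ∨ (∃ q ∈ T, q.2 = p.2 ∧ q.1 < p.1)) ∧
    (∀ p ∈ T, p ≠ ((0 : ℤ), (ν.count true : ℤ)) → ∃! q, NorthOrWestNearest T p q) ∧
    ∃ par : ℤ × ℤ → ℤ × ℤ,
      (∀ p ∈ T, p ≠ ((0 : ℤ), (ν.count true : ℤ)) → NorthOrWestNearest T p (par p)) ∧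
      ∀ p ∈ T, ∃ k : ℕ, par^[k] p = ((0 : ℤ), (ν.count true : ℤ)) := by
  have hex : ∀ p ∈ T, p ≠ nuRoot ν → ∃ q, NorthOrWestNearest T p q := fun p hp hne =>
    (hT.exists_north_or_west hp hne).elim exists_northOrWestNearest_of_north
      exists_northOrWestNearest_of_west
  set par := fun p => Classical.epsilon (NorthOrWestNearest T p)
  have hpar : ∀ p ∈ T, p ≠ nuRoot ν → NorthOrWestNearest T p (par p) := fun p hp hne =>
    Classical.epsilon_spec (hex p hp hne)
  refine ⟨hT.nuRoot_mem, fun p hp hne => hT.exists_north_or_west hp hne,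
    fun p hp hne => ?_, par, hpar, ?_⟩
  · obtain ⟨q, hq⟩ := hex p hp hne
    exact ⟨q, hq, fun q' hq' => hq'.eq (hT.not_north_and_west hp) hq⟩
  · refine exists_iterate_eq_of_measure_lt par (fun p => (p.1 + (ν.count true - p.2)).toNat)
      fun p hp hne => ⟨(hpar p hp hne).1, ?_⟩
    have := nonneg_fst_of_mem_Anu (hT.1 (hpar p hp hne).1)
    have := snd_le_of_mem_Anu (hT.1 (hpar p hp hne).1)
    rcases (hpar p hp hne).2 with ⟨h₁, h₂, -⟩ | ⟨h₂, h₁, -⟩ <;> omega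
end

section
/- Under a flip in a subword complex of type A exchanging position j₀ in facet J₀ for position j₀' in facet J₁ = J₀ ∖ {j₀} ∪ {j₀'}, the root function transforms as: r(J₁, j) = s_β(r(J₀, j)) if min(j₀, j₀') < j ≤ max(j₀, j₀'), and r(J₁, j) = r(J₀, j) otherwise, where β = r(J₀, j₀) and s_β is the reflection along β. -/
open scoped Classical

/-- The simple transposition `s_{p+1} = (p+1, p+2)` of `S_{n+1}` acting on `Fin (n+1)`
(0-indexed: swapping `p` and `p+1`). -/
def simpleS (n : ℕ) (q : Fin n) : Equiv.Perm (Fin (n + 1)) :=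
  Equiv.swap q.castSucc q.succ

/-- The Coxeter length of a permutation of type `A_n`: its number of inversions. -/
def invCount {N : ℕ} (w : Equiv.Perm (Fin N)) : ℕ :=
  (Finset.univ.filter fun pq : Fin N × Fin N => pq.1 < pq.2 ∧ w pq.2 < w pq.1).card

/-- The subword `Q_{[m]∖I}` of `Q`, as a list of simple transpositions, read in
increasing order of positions. -/
def compWord {n m : ℕ} (Q : Fin m → Fin n) (I : Finset (Fin m)) :
    List (Equiv.Perm (Fin (n + 1))) :=
  ((List.finRange m).filter fun a => decide (a ∉ I)).map fun a => simpleS n (Q a)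

/-- `I` is a facet of the subword complex `SC(Q,w)`: the complement `Q_{[m]∖I}` is a
reduced expression for `w`. -/
def IsFacet {n m : ℕ} (Q : Fin m → Fin n) (w : Equiv.Perm (Fin (n + 1)))
    (I : Finset (Fin m)) : Prop :=
  (compWord Q I).prod = w ∧ (compWord Q I).length = invCount w

/-- The prefix product `∏ Q_{{1,…,k-1}∖I}`. -/
def prefixPerm {n m : ℕ} (Q : Fin m → Fin n) (I : Finset (Fin m)) (k : Fin m) :
    Equiv.Perm (Fin (n + 1)) :=
  (((List.finRange m).filter fun a => decide (a < k ∧ a ∉ I)).map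
    fun a => simpleS n (Q a)).prod

/-- The root function `r(I,k) := (∏ Q_{{1,…,k-1}∖I})(α_{q_k})`, where
`α_p = e_p - e_{p+1}` and permutations act on `ℝ^{n+1}` by permuting coordinates. -/
def rootFn {n m : ℕ} (Q : Fin m → Fin n) (I : Finset (Fin m)) (k : Fin m) :
    Fin (n + 1) → ℝ :=
  fun i => ((Pi.single (Fin.castSucc (Q k)) (1 : ℝ) : Fin (n + 1) → ℝ) -
      (Pi.single (Fin.succ (Q k)) (1 : ℝ) : Fin (n + 1) → ℝ))
    ((prefixPerm Q I k)⁻¹ i)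

open Matrix

/-- The reflection along the root `β`. -/
noncomputable def reflAlong {N : ℕ} (β : Fin N → ℝ) (x : Fin N → ℝ) : Fin N → ℝ :=
  x - (2 * (x ⬝ᵥ β) / (β ⬝ᵥ β)) • β

/-!
Write `π(I, k)` for the product of the first `k` letters of the word `Q_{[m]∖I}`. Then
`r(I, k) = π(I, k)(α_{q_k})`, and the reflection along it is the transposition
`t(I, k) = π(I, k) s_{q_k} π(I, k)⁻¹`. Deleting the letter at a position `t` from a word
multiplies every prefix containing it on the left by `t(I, t)`. Both `J₀` and `J₁` arise from
`K = J₀ ∖ {j₀}` by such a deletion, at `j₀` and at `j₀'` respectively; comparing the full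
products, which both equal `w`, shows that the two transpositions agree, so they are the
reflection `ρ = s_β`. Hence `π(J₁, j) = ρ^{[j₀ < j] + [j₀' < j]} π(J₀, j)`, which is
`ρ π(J₀, j)` exactly when `min j₀ j₀' < j ≤ max j₀ j₀'`, and `π(J₀, j)` otherwise.
-/

namespace List

variable {α M : Type*} [Monoid M]

theorem prod_map_filter_eq_prod_map_ite (l : List α) (p : α → Bool) (f : α → M) :
    ((l.filter p).map f).prod = (l.map fun a => if p a then f a else 1).prod := by
  induction l with
  | nil => rfl
  | cons a l ih => by_cases h : p a <;> simp [h, ih]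

theorem prod_map_range_ite_lt (f : ℕ → M) {k m : ℕ} (hk : k ≤ m) :
    ((range m).map fun b => if b < k then f b else 1).prod = ((range k).map f).prod := by
  induction m, hk using Nat.le_induction with
  | base => exact congrArg prod (map_congr_left fun b hb => if_pos (mem_range.1 hb))
  | succ m hkm ih => simp [range_succ, ih, hkm.not_gt]

end List

theorem reflAlong_single_sub_single {N : ℕ} {u v : Fin N} (huv : u ≠ v) (x : Fin N → ℝ) :
    reflAlong (Pi.single u 1 - Pi.single v 1) x = fun i => x (Equiv.swap u v i) := by
  have hβ : (Pi.single u 1 - Pi.single v 1 : Fin N → ℝ) ⬝ᵥ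
      (Pi.single u 1 - Pi.single v 1) = 2 := by
    simp [dotProduct_sub, huv, huv.symm]
    norm_num
  funext i
  rw [reflAlong, hβ]
  rcases eq_or_ne i u with rfl | hiu
  · simp [dotProduct_sub, huv]
  rcases eq_or_ne i v with rfl | hiv
  · simp [dotProduct_sub, huv]
  · simp [dotProduct_sub, hiu, hiv, Equiv.swap_apply_of_ne_of_ne]

section Subword

variable {n m : ℕ} (Q : Fin m → Fin n)

-- Letters at positions `≥ m` are trivial, so that `subwordPrefix Q I m` is the whole product.
def subwordLetter (I : Finset (Fin m)) (a : ℕ) : Equiv.Perm (Fin (n + 1)) :=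
  if h : a < m then (if ⟨a, h⟩ ∈ I then 1 else simpleS n (Q ⟨a, h⟩)) else 1

def subwordPrefix (I : Finset (Fin m)) (k : ℕ) : Equiv.Perm (Fin (n + 1)) :=
  ((List.range k).map (subwordLetter Q I)).prod

theorem subwordPrefix_succ (I : Finset (Fin m)) (k : ℕ) :
    subwordPrefix Q I (k + 1) = subwordPrefix Q I k * subwordLetter Q I k := by
  simp [subwordPrefix, List.range_succ]

theorem prod_filter_finRange_eq_subwordPrefix (I : Finset (Fin m)) {k : ℕ} (hk : k ≤ m)
    (p : Fin m → Bool) (hp : ∀ a, p a ↔ (a : ℕ) < k ∧ a ∉ I) :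
    (((List.finRange m).filter p).map fun a => simpleS n (Q a)).prod = subwordPrefix Q I k := by
  rw [List.prod_map_filter_eq_prod_map_ite, subwordPrefix,
    ← List.prod_map_range_ite_lt _ hk, ← List.map_coe_finRange_eq_range, List.map_map]
  congr 2
  funext a
  by_cases ha : (a : ℕ) < k <;> by_cases hI : a ∈ I <;> simp [subwordLetter, hp, ha, hI]

theorem subwordLetter_of_notMem {I : Finset (Fin m)} {t : Fin m} (ht : t ∉ I) :
    subwordLetter Q I t = simpleS n (Q t) := by
  simp [subwordLetter, ht]

theorem subwordLetter_of_mem {I : Finset (Fin m)} {t : Fin m} (ht : t ∈ I) :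
    subwordLetter Q I t = 1 := by
  simp [subwordLetter, ht]

theorem subwordLetter_insert_of_ne (I : Finset (Fin m)) {t : Fin m} {k : ℕ} (hk : k ≠ t) :
    subwordLetter Q (insert t I) k = subwordLetter Q I k := by
  unfold subwordLetter
  split_ifs with h <;> simp_all [Fin.ext_iff]

theorem prefixPerm_eq_subwordPrefix (I : Finset (Fin m)) (k : Fin m) :
    prefixPerm Q I k = subwordPrefix Q I k :=
  prod_filter_finRange_eq_subwordPrefix Q I k.isLt.le _ fun a => by simp

theorem compWord_prod_eq_subwordPrefix (I : Finset (Fin m)) :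
    (compWord Q I).prod = subwordPrefix Q I m :=
  prod_filter_finRange_eq_subwordPrefix Q I le_rfl _ fun a => by simp [a.isLt]

def rootTransposition (I : Finset (Fin m)) (k : Fin m) : Equiv.Perm (Fin (n + 1)) :=
  Equiv.swap (prefixPerm Q I k (Q k).castSucc) (prefixPerm Q I k (Q k).succ)

theorem rootTransposition_eq_conj (I : Finset (Fin m)) (k : Fin m) :
    rootTransposition Q I k =
      subwordPrefix Q I k * simpleS n (Q k) * (subwordPrefix Q I k)⁻¹ := by
  rw [rootTransposition, Equiv.swap_apply_apply, prefixPerm_eq_subwordPrefix, simpleS]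

@[simp]
theorem rootTransposition_mul_self (I : Finset (Fin m)) (k : Fin m) :
    rootTransposition Q I k * rootTransposition Q I k = 1 :=
  Equiv.swap_mul_self _ _

-- Deleting a letter: `π s π' = (π s π⁻¹) π π'`.
theorem subwordPrefix_eq_mul_subwordPrefix_insert {I : Finset (Fin m)} {t : Fin m} (ht : t ∉ I)
    (k : ℕ) : subwordPrefix Q I k =
      (if (t : ℕ) < k then rootTransposition Q I t else 1) * subwordPrefix Q (insert t I) k := by
  induction k with
  | zero => simp [subwordPrefix]
  | succ k ih =>
    rw [subwordPrefix_succ, subwordPrefix_succ, ih]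
    rcases lt_trichotomy (t : ℕ) k with htk | rfl | htk
    · rw [if_pos htk, if_pos (htk.trans k.lt_succ_self), subwordLetter_insert_of_ne Q I htk.ne',
        mul_assoc]
    · rw [if_neg (lt_irrefl _), if_pos (Nat.lt_succ_self _), one_mul] at *
      rw [subwordLetter_of_notMem Q ht, subwordLetter_of_mem Q (Finset.mem_insert_self t I),
        rootTransposition_eq_conj, ih]
      group
    · rw [if_neg htk.not_gt, if_neg (Nat.lt_succ_iff.not.2 htk.not_ge),
        subwordLetter_insert_of_ne Q I htk.ne, mul_assoc]

theorem subwordPrefix_insert_of_le {I : Finset (Fin m)} {t : Fin m} (ht : t ∉ I) {k : ℕ}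
    (hk : k ≤ t) : subwordPrefix Q (insert t I) k = subwordPrefix Q I k := by
  simpa [hk.not_gt] using (subwordPrefix_eq_mul_subwordPrefix_insert Q ht k).symm

theorem rootTransposition_insert_self {I : Finset (Fin m)} {t : Fin m} (ht : t ∉ I) :
    rootTransposition Q (insert t I) t = rootTransposition Q I t := by
  simp only [rootTransposition, prefixPerm_eq_subwordPrefix,
    subwordPrefix_insert_of_le Q ht le_rfl]

theorem subwordPrefix_flip {K J₀ J₁ : Finset (Fin m)} {j₀ j₀' : Fin m} (hj₀ : j₀ ∉ K)
    (hj₀' : j₀' ∉ K) (hJ₀ : J₀ = insert j₀ K) (hJ₁ : J₁ = insert j₀' K)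
    (hprod : (compWord Q J₀).prod = (compWord Q J₁).prod) (k : ℕ) :
    subwordPrefix Q J₁ k = (if (j₀' : ℕ) < k then rootTransposition Q J₀ j₀ else 1) *
      ((if (j₀ : ℕ) < k then rootTransposition Q J₀ j₀ else 1) * subwordPrefix Q J₀ k) := by
  subst hJ₀ hJ₁
  have h₀ := subwordPrefix_eq_mul_subwordPrefix_insert Q hj₀
  have h₁ := subwordPrefix_eq_mul_subwordPrefix_insert Q hj₀'
  have hρ : rootTransposition Q K j₀' = rootTransposition Q K j₀ := by
    have h := (h₁ m).symm.trans (h₀ m)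
    rwa [← compWord_prod_eq_subwordPrefix, ← compWord_prod_eq_subwordPrefix, ← hprod,
      if_pos j₀.isLt, if_pos j₀'.isLt, mul_left_inj] at h
  rw [rootTransposition_insert_self Q hj₀, ← h₀, h₁, hρ, ← mul_assoc]
  split_ifs <;> simp

theorem prefixPerm_flip {J₀ J₁ : Finset (Fin m)}
    (hprod : (compWord Q J₀).prod = (compWord Q J₁).prod) {j₀ j₀' : Fin m} (hj₀ : j₀ ∈ J₀)
    (hj₀' : j₀' ∉ J₀) (hflip : J₁ = insert j₀' (J₀.erase j₀)) (j : Fin m) :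
    prefixPerm Q J₁ j =
      (if min j₀ j₀' < j ∧ j ≤ max j₀ j₀' then rootTransposition Q J₀ j₀ else 1) *
        prefixPerm Q J₀ j := by
  rw [prefixPerm_eq_subwordPrefix, prefixPerm_eq_subwordPrefix,
    subwordPrefix_flip Q (Finset.notMem_erase j₀ J₀) (fun h => hj₀' (Finset.mem_of_mem_erase h))
      (Finset.insert_erase hj₀).symm hflip hprod]
  have hcond : min j₀ j₀' < j ∧ j ≤ max j₀ j₀' ↔ (j₀ < j ↔ ¬j₀' < j) := by
    rw [min_lt_iff, le_max_iff, ← not_lt, ← not_lt]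
    tauto
  simp only [Fin.val_fin_lt, hcond]
  by_cases h₀ : j₀ < j <;> by_cases h₁ : j₀' < j <;> simp [h₀, h₁, ← mul_assoc]

theorem rootFn_eq_single_sub_single (I : Finset (Fin m)) (k : Fin m) :
    rootFn Q I k = Pi.single (prefixPerm Q I k (Q k).castSucc) 1 -
      Pi.single (prefixPerm Q I k (Q k).succ) 1 := by
  funext i
  simp only [rootFn, Pi.sub_apply, Pi.single_apply, Equiv.Perm.inv_eq_iff_eq]

theorem reflAlong_rootFn (I : Finset (Fin m)) (k : Fin m) (x : Fin (n + 1) → ℝ) :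
    reflAlong (rootFn Q I k) x = fun i => x (rootTransposition Q I k i) := by
  rw [rootFn_eq_single_sub_single, reflAlong_single_sub_single]
  · rfl
  · exact (prefixPerm Q I k).injective.ne Fin.castSucc_lt_succ.ne

theorem rootFn_of_prefixPerm_eq_mul {I I' : Finset (Fin m)} {k : Fin m}
    {σ : Equiv.Perm (Fin (n + 1))} (h : prefixPerm Q I' k = σ * prefixPerm Q I k) :
    rootFn Q I' k = fun i => rootFn Q I k (σ⁻¹ i) := by
  funext i
  simp [rootFn, h]

end Subword

theorem rootFn_flip_general {n m : ℕ} (Q : Fin m → Fin n) (w : Equiv.Perm (Fin (n + 1)))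
    (J₀ J₁ : Finset (Fin m)) (hJ₀ : IsFacet Q w J₀) (hJ₁ : IsFacet Q w J₁)
    (j₀ j₀' : Fin m) (hj₀ : j₀ ∈ J₀) (hj₀' : j₀' ∉ J₀)
    (hflip : J₁ = insert j₀' (J₀.erase j₀)) :
    ∀ j : Fin m,
      (min j₀ j₀' < j ∧ j ≤ max j₀ j₀' →
        rootFn Q J₁ j = reflAlong (rootFn Q J₀ j₀) (rootFn Q J₀ j)) ∧
      (¬(min j₀ j₀' < j ∧ j ≤ max j₀ j₀') → rootFn Q J₁ j = rootFn Q J₀ j) := by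
  intro j
  have h := prefixPerm_flip Q (hJ₀.1.trans hJ₁.1.symm) hj₀ hj₀' hflip j
  constructor
  · intro hj
    rw [if_pos hj] at h
    rw [rootFn_of_prefixPerm_eq_mul Q h, reflAlong_rootFn, rootTransposition, Equiv.swap_inv]
  · intro hj
    rw [if_neg hj, one_mul] at h
    unfold rootFn
    rw [h]

/-- under the flip exchanging position `j₀` of the facet `J₀` for `j₀'`,
giving the facet `J₁ = J₀ ∖ {j₀} ∪ {j₀'}`, the root function transforms by the
reflection `s_β` with `β = r(J₀, j₀)` on the positions strictly between the minimum
(exclusive) and maximum (inclusive) of `j₀, j₀'`, and is unchanged elsewhere. -/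
theorem rootFn_flip {n m : ℕ} (Q : Fin m → Fin n) (w : Equiv.Perm (Fin (n + 1)))
    (J₀ J₁ : Finset (Fin m)) (hJ₀ : IsFacet Q w J₀) (hJ₁ : IsFacet Q w J₁)
    (j₀ j₀' : Fin m) (hj₀ : j₀ ∈ J₀) (hj₀' : j₀' ∉ J₀) (hne : j₀ ≠ j₀')
    (hflip : J₁ = insert j₀' (J₀.erase j₀)) :
    ∀ j : Fin m,
      (min j₀ j₀' < j ∧ j ≤ max j₀ j₀' →
        rootFn Q J₁ j = reflAlong (rootFn Q J₀ j₀) (rootFn Q J₀ j)) ∧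
      (¬(min j₀ j₀' < j ∧ j ≤ max j₀ j₀') → rootFn Q J₁ j = rootFn Q J₀ j) :=
  rootFn_flip_general Q w J₀ J₁ hJ₀ hJ₁ j₀ j₀' hj₀ hj₀' hflip
end
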